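/- Fix an integer N ≥ 1 and σ_w > 0, and let k(y, z) = 2^{−N} ∑_{k=1}^N (N choose k) (1/(σ_w² y)) p_{χ²_k}(z/(σ_w² y)) be the ReLU transition kernel density with σ_b = 0, where p_{χ²_k}(t) = t^{k/2−1} e^{−t/2} / (2^{k/2} Γ(k/2)). Then for every z > 0, ∫_0^∞ k(y, z) y^{−1} dy = (1 − 2^{−N}) z^{−1}. In particular, the eigenvalue of the transition operator corresponding to the eigenfunction y ↦ y^{−1} is 1 − 2^{−N}, independent of σ_w, and it tends to 1 as N → ∞. -/

import Mathlib

open MeasureTheory Filter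

/-- The density of the chi-squared distribution with `k` degrees of freedom:
`p_{χ²_k}(t) = t^(k/2−1) e^(−t/2) / (2^(k/2) Γ(k/2))`. -/
noncomputable def chiSqPDF (k : ℕ) (t : ℝ) : ℝ :=
  t ^ ((k : ℝ) / 2 - 1) * Real.exp (-t / 2)
    / ((2 : ℝ) ^ ((k : ℝ) / 2) * Real.Gamma ((k : ℝ) / 2))

/-- The ReLU layer transition kernel density with `σ_b = 0`:
`k(y, z) = 2^{−N} ∑_{k=1}^N (N choose k) (1/(σw² y)) p_{χ²_k}(z/(σw² y))`. -/
noncomputable def reluKernel (N : ℕ) (σw y z : ℝ) : ℝ :=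
  (2 : ℝ)⁻¹ ^ N * ∑ k ∈ Finset.Icc 1 N,
    (N.choose k : ℝ) * (1 / (σw ^ 2 * y)) * chiSqPDF k (z / (σw ^ 2 * y))

/-!
The kernel is a scale family: `k(y, z) = (σw² y)⁻¹ H(z / (σw² y))`, where `H = reluSqNormPDF N`
is the density of the squared norm at unit pre-activation variance. The substitution `y = 1/t` followed by
`t ↦ (z / σw²) t` turns `∫ k(y, z) y⁻¹ dy` into `z⁻¹ ∫ H`, and `σw` cancels. Finally `H` is a
binomial mixture of `χ²` densities of total mass `1 − 2^{−N}`: the missing `2^{−N}` is the atom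
at `0` where every neuron is inactive.
-/

open Set

theorem integral_Ioi_scaledDensity_mul_inv (f : ℝ → ℝ) {c z : ℝ} (hc : 0 < c) (hz : 0 < z) :
    ∫ y in Ioi 0, 1 / (c * y) * f (z / (c * y)) * y⁻¹ = (∫ t in Ioi 0, f t) / z := by
  have hzc : 0 < z / c := div_pos hz hc
  have hinv : ∫ y in Ioi 0, 1 / (c * y) * f (z / (c * y)) * y⁻¹
      = c⁻¹ * ∫ t in Ioi 0, f (z / c * t) := by
    rw [← integral_const_mul, ← integral_comp_rpow_Ioi (fun t ↦ c⁻¹ * f (z / c * t))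
      (by norm_num : (-1 : ℝ) ≠ 0)]
    refine setIntegral_congr_fun measurableSet_Ioi fun y (hy : 0 < y) ↦ ?_
    rw [show (-1 : ℝ) - 1 = -2 by norm_num, Real.rpow_neg hy.le, Real.rpow_neg_one,
      Real.rpow_two, smul_eq_mul, abs_neg, abs_one]
    field_simp
  rw [hinv, integral_comp_mul_left_Ioi _ _ hzc, mul_zero, smul_eq_mul]
  field_simp

theorem integrableOn_chiSqPDF {k : ℕ} (hk : k ≠ 0) : IntegrableOn (chiSqPDF k) (Ioi 0) := by
  have hs : (-1 : ℝ) < k / 2 - 1 := by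
    have : (1 : ℝ) ≤ k := by exact_mod_cast Nat.one_le_iff_ne_zero.mpr hk
    linarith
  refine IntegrableOn.congr_fun ((integrableOn_rpow_mul_exp_neg_mul_rpow hs one_pos
    (by norm_num : (0 : ℝ) < 1 / 2)).div_const ((2 : ℝ) ^ ((k : ℝ) / 2) * Real.Gamma (k / 2)))
    (fun t _ ↦ ?_) measurableSet_Ioi
  rw [chiSqPDF, Real.rpow_one, neg_mul, one_div_mul_eq_div, neg_div]

theorem integral_chiSqPDF {k : ℕ} (hk : k ≠ 0) : ∫ t in Ioi 0, chiSqPDF k t = 1 := by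
  have ha : (0 : ℝ) < k / 2 := by positivity
  have hexp : ∀ t : ℝ, Real.exp (-t / 2) = Real.exp (-(1 / 2 * t)) := fun t ↦ by ring_nf
  simp only [chiSqPDF, hexp]
  rw [integral_div, Real.integral_rpow_mul_exp_neg_mul_Ioi ha (by norm_num), one_div_one_div]
  have := Real.Gamma_pos_of_pos ha
  field_simp

theorem sum_Icc_one_choose (N : ℕ) : ∑ k ∈ Finset.Icc 1 N, (N.choose k : ℝ) = 2 ^ N - 1 := by
  have h := Nat.sum_range_choose N
  rw [Finset.range_eq_Ico, Finset.sum_eq_sum_Ico_succ_bot (by omega : 0 < N + 1), zero_add,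
    Finset.Ico_add_one_right_eq_Icc, Nat.choose_zero_right] at h
  rw [eq_sub_iff_add_eq, add_comm]
  exact_mod_cast h

noncomputable def reluSqNormPDF (N : ℕ) (s : ℝ) : ℝ :=
  (2 : ℝ)⁻¹ ^ N * ∑ k ∈ Finset.Icc 1 N, (N.choose k : ℝ) * chiSqPDF k s

theorem reluKernel_eq_scale (N : ℕ) (σw y z : ℝ) :
    reluKernel N σw y z = 1 / (σw ^ 2 * y) * reluSqNormPDF N (z / (σw ^ 2 * y)) := by
  simp only [reluKernel, reluSqNormPDF, Finset.mul_sum]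
  exact Finset.sum_congr rfl fun k _ ↦ by ring

theorem integral_reluSqNormPDF (N : ℕ) : ∫ s in Ioi 0, reluSqNormPDF N s = 1 - (2 : ℝ)⁻¹ ^ N := by
  have hint : ∀ k ∈ Finset.Icc 1 N, Integrable (fun s ↦ (N.choose k : ℝ) * chiSqPDF k s)
      (volume.restrict (Ioi 0)) := fun k hk ↦
    (integrableOn_chiSqPDF (Nat.one_le_iff_ne_zero.mp (Finset.mem_Icc.mp hk).1)).const_mul _
  have hterm : ∀ k ∈ Finset.Icc 1 N, ∫ s in Ioi 0, (N.choose k : ℝ) * chiSqPDF k s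
      = N.choose k := fun k hk ↦ by
    rw [integral_const_mul, integral_chiSqPDF (Nat.one_le_iff_ne_zero.mp (Finset.mem_Icc.mp hk).1),
      mul_one]
  simp only [reluSqNormPDF, integral_const_mul]
  rw [integral_finsetSum _ hint, Finset.sum_congr rfl hterm, sum_Icc_one_choose, mul_sub,
    ← mul_pow, inv_mul_cancel₀ two_ne_zero, one_pow, mul_one]

theorem reluKernel_inv_eigenfunction_general
    (N : ℕ) (σw : ℝ) (hσw : 0 < σw) :
    (∀ z : ℝ, 0 < z →
        ∫ y in Set.Ioi (0 : ℝ), reluKernel N σw y z * y⁻¹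
          = (1 - (2 : ℝ)⁻¹ ^ N) * z⁻¹)
      ∧ Tendsto (fun n : ℕ => 1 - (2 : ℝ)⁻¹ ^ n) atTop (nhds 1) := by
  refine ⟨fun z hz ↦ ?_, ?_⟩
  · simp_rw [reluKernel_eq_scale]
    rw [integral_Ioi_scaledDensity_mul_inv _ (by positivity) hz, integral_reluSqNormPDF,
      div_eq_mul_inv]
  · simpa using tendsto_const_nhds.sub
      (tendsto_pow_atTop_nhds_zero_of_lt_one (by norm_num : (0 : ℝ) ≤ 2⁻¹) (by norm_num))

/-- For `N ≥ 1` and `σw > 0`, the function `y ↦ y⁻¹` is an eigenfunction of the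
ReLU layer transition operator with `σ_b = 0`, with eigenvalue `1 − 2^{−N}`,
independently of `σw`: for every `z > 0`,
`∫_0^∞ k(y, z) y⁻¹ dy = (1 − 2^{−N}) z⁻¹`. Moreover this eigenvalue tends to
`1` as `N → ∞`. -/
theorem reluKernel_inv_eigenfunction
    (N : ℕ) (hN : 1 ≤ N) (σw : ℝ) (hσw : 0 < σw) :
    (∀ z : ℝ, 0 < z →
        ∫ y in Set.Ioi (0 : ℝ), reluKernel N σw y z * y⁻¹
          = (1 - (2 : ℝ)⁻¹ ^ N) * z⁻¹)
      ∧ Tendsto (fun n : ℕ => 1 - (2 : ℝ)⁻¹ ^ n) atTop (nhds 1) :=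
  reluKernel_inv_eigenfunction_general N σw hσw
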